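/- arXiv:2402.11987 — 5 statements merged into one kernel-verified Lean document; each statement's English description precedes it below -/
import Mathlib

section
/- The rewriting system 𝔇 on MALL formulas is strongly normalizing: there is no infinite sequence of 𝔇-reduction steps. -/
/-- MALL formulas. -/
inductive MF where
  | pos (x : ℕ)
  | neg (x : ℕ)
  | tens (a b : MF)
  | parr (a b : MF)
  | one
  | bot
  | withh (a b : MF)
  | oplus (a b : MF)
  | top
  | zero
/-- One step of the rewriting system 𝔇 (contextual closure of the rules). -/
inductive DStep : MF → MF → Prop where
  | tens_oplus_r (a b c) : DStep (MF.tens a (MF.oplus b c)) (MF.oplus (MF.tens a b) (MF.tens a c))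
  | tens_oplus_l (a b c) : DStep (MF.tens (MF.oplus a b) c) (MF.oplus (MF.tens a c) (MF.tens b c))
  | parr_with_l (a b c) : DStep (MF.parr (MF.withh c b) a) (MF.withh (MF.parr c a) (MF.parr b a))
  | parr_with_r (a b c) : DStep (MF.parr c (MF.withh b a)) (MF.withh (MF.parr c b) (MF.parr c a))
  | tens_one_r (a) : DStep (MF.tens a MF.one) a
  | tens_one_l (a) : DStep (MF.tens MF.one a) a
  | parr_bot_r (a) : DStep (MF.parr a MF.bot) a
  | parr_bot_l (a) : DStep (MF.parr MF.bot a) a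
  | oplus_zero_r (a) : DStep (MF.oplus a MF.zero) a
  | oplus_zero_l (a) : DStep (MF.oplus MF.zero a) a
  | with_top_r (a) : DStep (MF.withh a MF.top) a
  | with_top_l (a) : DStep (MF.withh MF.top a) a
  | tens_zero_r (a) : DStep (MF.tens a MF.zero) MF.zero
  | tens_zero_l (a) : DStep (MF.tens MF.zero a) MF.zero
  | parr_top_r (a) : DStep (MF.parr a MF.top) MF.top
  | parr_top_l (a) : DStep (MF.parr MF.top a) MF.top
  | tens_l : DStep a a' → DStep (MF.tens a b) (MF.tens a' b)
  | tens_r : DStep b b' → DStep (MF.tens a b) (MF.tens a b')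
  | parr_l : DStep a a' → DStep (MF.parr a b) (MF.parr a' b)
  | parr_r : DStep b b' → DStep (MF.parr a b) (MF.parr a b')
  | with_l : DStep a a' → DStep (MF.withh a b) (MF.withh a' b)
  | with_r : DStep b b' → DStep (MF.withh a b) (MF.withh a b')
  | oplus_l : DStep a a' → DStep (MF.oplus a b) (MF.oplus a' b)
  | oplus_r : DStep b b' → DStep (MF.oplus a b) (MF.oplus a b')


def MF.w : MF → ℕ
  | .pos _ => 2
  | .neg _ => 2
  | .one => 2
  | .bot => 2
  | .top => 2
  | .zero => 2
  | .tens a b => a.w * b.w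
  | .parr a b => a.w * b.w
  | .withh a b => a.w + b.w + 1
  | .oplus a b => a.w + b.w + 1

lemma MF.two_le_w (a : MF) : 2 ≤ a.w := by
  induction a with
  | tens a b ha hb => calc 2 ≤ 2 * 2 := by norm_num
                           _ ≤ a.w * b.w := Nat.mul_le_mul ha hb
  | parr a b ha hb => calc 2 ≤ 2 * 2 := by norm_num
                           _ ≤ a.w * b.w := Nat.mul_le_mul ha hb
  | withh a b ha hb => simp [MF.w]; omega
  | oplus a b ha hb => simp [MF.w]; omega
  | _ => simp [MF.w]

lemma dstep_w_lt : ∀ {a b : MF}, DStep a b → b.w < a.w := by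
  intro a b h
  induction h with
  | tens_oplus_r a b c =>
      have ha := a.two_le_w
      simp only [MF.w]; nlinarith [b.two_le_w, c.two_le_w]
  | tens_oplus_l a b c =>
      have hc := c.two_le_w
      simp only [MF.w]; nlinarith [a.two_le_w, b.two_le_w]
  | parr_with_l a b c =>
      have ha := a.two_le_w
      simp only [MF.w]; nlinarith [b.two_le_w, c.two_le_w]
  | parr_with_r a b c =>
      have hc := c.two_le_w
      simp only [MF.w]; nlinarith [a.two_le_w, b.two_le_w]
  | tens_one_r a => simp only [MF.w]; have := a.two_le_w; omega
  | tens_one_l a => simp only [MF.w]; have := a.two_le_w; omega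
  | parr_bot_r a => simp only [MF.w]; have := a.two_le_w; omega
  | parr_bot_l a => simp only [MF.w]; have := a.two_le_w; omega
  | oplus_zero_r a => simp only [MF.w]; omega
  | oplus_zero_l a => simp only [MF.w]; omega
  | with_top_r a => simp only [MF.w]; omega
  | with_top_l a => simp only [MF.w]; omega
  | tens_zero_r a => simp only [MF.w]; have := a.two_le_w; omega
  | tens_zero_l a => simp only [MF.w]; have := a.two_le_w; omega
  | parr_top_r a => simp only [MF.w]; have := a.two_le_w; omega
  | parr_top_l a => simp only [MF.w]; have := a.two_le_w; omega
  | @tens_l a a' b _ ih => simp only [MF.w]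
                           exact Nat.mul_lt_mul_of_lt_of_le ih le_rfl (by have := b.two_le_w; omega)
  | @tens_r b b' a _ ih => simp only [MF.w]
                           exact Nat.mul_lt_mul_of_le_of_lt le_rfl ih (by have := a.two_le_w; omega)
  | @parr_l a a' b _ ih => simp only [MF.w]
                           exact Nat.mul_lt_mul_of_lt_of_le ih le_rfl (by have := b.two_le_w; omega)
  | @parr_r b b' a _ ih => simp only [MF.w]
                           exact Nat.mul_lt_mul_of_le_of_lt le_rfl ih (by have := a.two_le_w; omega)
  | with_l _ ih => simp only [MF.w]; omega
  | with_r _ ih => simp only [MF.w]; omega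
  | oplus_l _ ih => simp only [MF.w]; omega
  | oplus_r _ ih => simp only [MF.w]; omega

/-- The rewriting system 𝔇 is strongly normalizing:
there is no infinite sequence of 𝔇-reduction steps. -/
theorem dstep_strongly_normalizing :
    ∀ f : ℕ → MF, ¬ (∀ n : ℕ, DStep (f n) (f (n + 1))) := by
  intro f hf
  have : ∀ n, (f (n+1)).w < (f n).w := fun n => dstep_w_lt (hf n)
  have key : ∀ n, (f n).w + n ≤ (f 0).w := by
    intro n
    induction n with
    | zero => omega
    | succ k ih => have := this k; omega
  have := key ((f 0).w + 1)
  omega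
end

section
/- The equational theory AC preserves distributedness: if A ≡_AC B and A is distributed, then B is distributed. -/
/-- Subf-formula relation: `Subf a b` means `a` is a sub-formula of `b`. -/
inductive Subf : MF → MF → Prop where
  | refl (a) : Subf a a
  | tens_l : Subf a b → Subf a (MF.tens b c)
  | tens_r : Subf a c → Subf a (MF.tens b c)
  | parr_l : Subf a b → Subf a (MF.parr b c)
  | parr_r : Subf a c → Subf a (MF.parr b c)
  | with_l : Subf a b → Subf a (MF.withh b c)
  | with_r : Subf a c → Subf a (MF.withh b c)
  | oplus_l : Subf a b → Subf a (MF.oplus b c)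
  | oplus_r : Subf a c → Subf a (MF.oplus b c)

/-- Forbidden shapes for distributed formulas. -/
inductive Bad : MF → Prop where
  | tens_oplus_r (a b c) : Bad (MF.tens a (MF.oplus b c))
  | tens_oplus_l (a b c) : Bad (MF.tens (MF.oplus a b) c)
  | tens_one_r (a) : Bad (MF.tens a MF.one)
  | tens_one_l (a) : Bad (MF.tens MF.one a)
  | oplus_zero_r (a) : Bad (MF.oplus a MF.zero)
  | oplus_zero_l (a) : Bad (MF.oplus MF.zero a)
  | tens_zero_r (a) : Bad (MF.tens a MF.zero)
  | tens_zero_l (a) : Bad (MF.tens MF.zero a)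
  | parr_with_l (a b c) : Bad (MF.parr (MF.withh c b) a)
  | parr_with_r (a b c) : Bad (MF.parr c (MF.withh b a))
  | parr_bot_l (a) : Bad (MF.parr MF.bot a)
  | parr_bot_r (a) : Bad (MF.parr a MF.bot)
  | with_top_l (a) : Bad (MF.withh MF.top a)
  | with_top_r (a) : Bad (MF.withh a MF.top)
  | parr_top_l (a) : Bad (MF.parr MF.top a)
  | parr_top_r (a) : Bad (MF.parr a MF.top)

/-- A formula is distributed when no sub-formula has a forbidden shape. -/
def Distributed (A : MF) : Prop := ∀ B, Subf B A → ¬ Bad B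
/-- The equational theory AC: the smallest congruence containing associativity
and commutativity of ⊗, ⅋, & and ⊕. -/
inductive ACeq : MF → MF → Prop where
  | refl (a) : ACeq a a
  | symm : ACeq a b → ACeq b a
  | trans : ACeq a b → ACeq b c → ACeq a c
  | tens_congr : ACeq a a' → ACeq b b' → ACeq (MF.tens a b) (MF.tens a' b')
  | parr_congr : ACeq a a' → ACeq b b' → ACeq (MF.parr a b) (MF.parr a' b')
  | with_congr : ACeq a a' → ACeq b b' → ACeq (MF.withh a b) (MF.withh a' b')
  | oplus_congr : ACeq a a' → ACeq b b' → ACeq (MF.oplus a b) (MF.oplus a' b')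
  | tens_assoc (a b c) : ACeq (MF.tens a (MF.tens b c)) (MF.tens (MF.tens a b) c)
  | tens_comm (a b) : ACeq (MF.tens a b) (MF.tens b a)
  | parr_assoc (a b c) : ACeq (MF.parr a (MF.parr b c)) (MF.parr (MF.parr a b) c)
  | parr_comm (a b) : ACeq (MF.parr a b) (MF.parr b a)
  | with_assoc (a b c) : ACeq (MF.withh a (MF.withh b c)) (MF.withh (MF.withh a b) c)
  | with_comm (a b) : ACeq (MF.withh a b) (MF.withh b a)
  | oplus_assoc (a b c) : ACeq (MF.oplus a (MF.oplus b c)) (MF.oplus (MF.oplus a b) c)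
  | oplus_comm (a b) : ACeq (MF.oplus a b) (MF.oplus b a)

def tOff : MF → Bool
  | .oplus _ _ => true
  | .one => true
  | .zero => true
  | _ => false

def pOff : MF → Bool
  | .withh _ _ => true
  | .bot => true
  | .top => true
  | _ => false

def wOff : MF → Bool
  | .top => true
  | _ => false

def oOff : MF → Bool
  | .zero => true
  | _ => false

def distB : MF → Bool
  | .tens a b => distB a && distB b && !tOff a && !tOff b
  | .parr a b => distB a && distB b && !pOff a && !pOff b
  | .withh a b => distB a && distB b && !wOff a && !wOff b
  | .oplus a b => distB a && distB b && !oOff a && !oOff b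
  | _ => true

lemma aceq_shape {a b : MF} (h : ACeq a b) :
    tOff a = tOff b ∧ pOff a = pOff b ∧ wOff a = wOff b ∧ oOff a = oOff b := by
  induction h with
  | refl => exact ⟨rfl, rfl, rfl, rfl⟩
  | symm _ ih => exact ⟨ih.1.symm, ih.2.1.symm, ih.2.2.1.symm, ih.2.2.2.symm⟩
  | trans _ _ ih1 ih2 =>
      exact ⟨ih1.1.trans ih2.1, ih1.2.1.trans ih2.2.1, ih1.2.2.1.trans ih2.2.2.1,
        ih1.2.2.2.trans ih2.2.2.2⟩
  | _ => simp [tOff, pOff, wOff, oOff]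

lemma aceq_distB {a b : MF} (h : ACeq a b) : distB a = distB b := by
  induction h with
  | refl => rfl
  | symm _ ih => exact ih.symm
  | trans _ _ ih1 ih2 => exact ih1.trans ih2
  | tens_congr h1 h2 ih1 ih2 => simp [distB, ih1, ih2, (aceq_shape h1).1, (aceq_shape h2).1]
  | parr_congr h1 h2 ih1 ih2 => simp [distB, ih1, ih2, (aceq_shape h1).2.1, (aceq_shape h2).2.1]
  | with_congr h1 h2 ih1 ih2 => simp [distB, ih1, ih2, (aceq_shape h1).2.2.1, (aceq_shape h2).2.2.1]
  | oplus_congr h1 h2 ih1 ih2 => simp [distB, ih1, ih2, (aceq_shape h1).2.2.2, (aceq_shape h2).2.2.2]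
  | _ =>
      simp [distB, tOff, pOff, wOff, oOff, Bool.and_assoc, Bool.and_comm, Bool.and_left_comm]

lemma bad_distB {B : MF} (h : Bad B) : distB B = false := by
  cases h <;> simp [distB, tOff, pOff, wOff, oOff]

lemma subf_distB {B A : MF} (h : Subf B A) (hA : distB A = true) : distB B = true := by
  induction h with
  | refl => exact hA
  | tens_l _ ih => simp [distB] at hA; exact ih hA.1.1.1
  | tens_r _ ih => simp [distB] at hA; exact ih hA.1.1.2
  | parr_l _ ih => simp [distB] at hA; exact ih hA.1.1.1
  | parr_r _ ih => simp [distB] at hA; exact ih hA.1.1.2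
  | with_l _ ih => simp [distB] at hA; exact ih hA.1.1.1
  | with_r _ ih => simp [distB] at hA; exact ih hA.1.1.2
  | oplus_l _ ih => simp [distB] at hA; exact ih hA.1.1.1
  | oplus_r _ ih => simp [distB] at hA; exact ih hA.1.1.2

lemma distributed_of_distB {A : MF} (hA : distB A = true) : Distributed A := by
  intro B hs hb
  exact absurd (subf_distB hs hA) (by simp [bad_distB hb])

lemma distB_of_distributed {A : MF} (hA : Distributed A) : distB A = true := by
  induction A with
  | tens a b iha ihb =>
      have ha := iha (fun C hC => hA C (Subf.tens_l hC))
      have hb := ihb (fun C hC => hA C (Subf.tens_r hC))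
      have hroot := hA _ (Subf.refl _)
      have t1 : tOff a = false := by
        cases a <;> simp [tOff] <;> exact hroot (by constructor)
      have t2 : tOff b = false := by
        cases b <;> simp [tOff] <;> exact hroot (by constructor)
      simp [distB, ha, hb, t1, t2]
  | parr a b iha ihb =>
      have ha := iha (fun C hC => hA C (Subf.parr_l hC))
      have hb := ihb (fun C hC => hA C (Subf.parr_r hC))
      have hroot := hA _ (Subf.refl _)
      have t1 : pOff a = false := by
        cases a <;> simp [pOff] <;> exact hroot (by constructor)
      have t2 : pOff b = false := by
        cases b <;> simp [pOff] <;> exact hroot (by constructor)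
      simp [distB, ha, hb, t1, t2]
  | withh a b iha ihb =>
      have ha := iha (fun C hC => hA C (Subf.with_l hC))
      have hb := ihb (fun C hC => hA C (Subf.with_r hC))
      have hroot := hA _ (Subf.refl _)
      have t1 : wOff a = false := by
        cases a <;> simp [wOff] <;> exact hroot (by constructor)
      have t2 : wOff b = false := by
        cases b <;> simp [wOff] <;> exact hroot (by constructor)
      simp [distB, ha, hb, t1, t2]
  | oplus a b iha ihb =>
      have ha := iha (fun C hC => hA C (Subf.oplus_l hC))
      have hb := ihb (fun C hC => hA C (Subf.oplus_r hC))
      have hroot := hA _ (Subf.refl _)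
      have t1 : oOff a = false := by
        cases a <;> simp [oOff] <;> exact hroot (by constructor)
      have t2 : oOff b = false := by
        cases b <;> simp [oOff] <;> exact hroot (by constructor)
      simp [distB, ha, hb, t1, t2]
  | _ => simp [distB]

/-- AC preserves distributedness. -/
theorem aceq_distributed (A B : MF) (h : ACeq A B) (hA : Distributed A) :
    Distributed B := by
  exact distributed_of_distB ((aceq_distB h).symm.trans (distB_of_distributed hA))
end

section
/- For every formula F in the language of star-autonomous categories with finite products, translating F to MALL and back yields a formula 𝒟-equal to F: ⟨⟦F⟧⟩ ≈_𝒟 F. -/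
/-- De Morgan duality on MALL formulas. -/
def MF.dual : MF → MF
  | MF.pos x => MF.neg x
  | MF.neg x => MF.pos x
  | MF.tens a b => MF.parr (MF.dual b) (MF.dual a)
  | MF.parr a b => MF.tens (MF.dual b) (MF.dual a)
  | MF.withh a b => MF.oplus (MF.dual b) (MF.dual a)
  | MF.oplus a b => MF.withh (MF.dual b) (MF.dual a)
  | MF.one => MF.bot
  | MF.bot => MF.one
  | MF.top => MF.zero
  | MF.zero => MF.top
/-- Formulas of star-autonomous categories with finite products. -/
inductive CF where
  | atom (x : ℕ)
  | tens (a b : CF)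
  | one
  | lol (a b : CF)
  | bot
  | withh (a b : CF)
  | top
/-- The equational theory 𝒟 of star-autonomous categories with finite products. -/
inductive Deq : CF → CF → Prop where
  | refl (a) : Deq a a
  | symm : Deq a b → Deq b a
  | trans : Deq a b → Deq b c → Deq a c
  | tens_congr : Deq a a' → Deq b b' → Deq (CF.tens a b) (CF.tens a' b')
  | lol_congr : Deq a a' → Deq b b' → Deq (CF.lol a b) (CF.lol a' b')
  | with_congr : Deq a a' → Deq b b' → Deq (CF.withh a b) (CF.withh a' b')
  | tens_assoc (a b c) : Deq (CF.tens a (CF.tens b c)) (CF.tens (CF.tens a b) c)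
  | tens_comm (a b) : Deq (CF.tens a b) (CF.tens b a)
  | tens_one (a) : Deq (CF.tens a CF.one) a
  | lol_tens (a b c) : Deq (CF.lol (CF.tens a b) c) (CF.lol a (CF.lol b c))
  | one_lol (a) : Deq (CF.lol CF.one a) a
  | with_assoc (a b c) : Deq (CF.withh a (CF.withh b c)) (CF.withh (CF.withh a b) c)
  | with_comm (a b) : Deq (CF.withh a b) (CF.withh b a)
  | with_top (a) : Deq (CF.withh a CF.top) a
  | lol_with (a b c) : Deq (CF.lol a (CF.withh b c)) (CF.withh (CF.lol a b) (CF.lol a c))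
  | lol_top (a) : Deq (CF.lol a CF.top) CF.top
  | dual_dual (a) : Deq (CF.lol (CF.lol a CF.bot) CF.bot) a
/-- The translation ⟨·⟩ of MALL formulas into the categorical language. -/
def trC : MF → CF
  | MF.pos x => CF.atom x
  | MF.neg x => CF.lol (CF.atom x) CF.bot
  | MF.tens a b => CF.tens (trC a) (trC b)
  | MF.one => CF.one
  | MF.parr a b => CF.lol (CF.tens (CF.lol (trC a) CF.bot) (CF.lol (trC b) CF.bot)) CF.bot
  | MF.bot => CF.bot
  | MF.withh a b => CF.withh (trC a) (trC b)
  | MF.top => CF.top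
  | MF.oplus a b => CF.lol (CF.withh (CF.lol (trC a) CF.bot) (CF.lol (trC b) CF.bot)) CF.bot
  | MF.zero => CF.lol CF.top CF.bot

/-- The forward translation ⟦·⟧ of categorical formulas into MALL formulas. -/
def trM : CF → MF
  | CF.atom x => MF.pos x
  | CF.tens a b => MF.tens (trM a) (trM b)
  | CF.one => MF.one
  | CF.lol a b => MF.parr (MF.dual (trM a)) (trM b)
  | CF.bot => MF.bot
  | CF.withh a b => MF.withh (trM a) (trM b)
  | CF.top => MF.top

lemma deq_lol_congr_l {a a' : CF} (b : CF) (h : Deq a a') :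
    Deq (CF.lol a b) (CF.lol a' b) := Deq.lol_congr h (Deq.refl b)

lemma deq_dd (a : CF) : Deq (CF.lol (CF.lol a CF.bot) CF.bot) a := Deq.dual_dual a

lemma deq_lol_bot_bot : Deq (CF.lol CF.bot CF.bot) CF.one :=
  Deq.trans (deq_lol_congr_l _ (Deq.symm (Deq.one_lol CF.bot)))
    (Deq.dual_dual CF.one)

/-- ⟨A⊥⟩ ≈ ⟨A⟩ ⊸ ⊥ -/
lemma trC_dual (A : MF) : Deq (trC (MF.dual A)) (CF.lol (trC A) CF.bot) := by
  induction A with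
  | pos x => exact Deq.refl _
  | neg x => exact Deq.symm (Deq.dual_dual _)
  | tens a b iha ihb =>
      -- dual = parr (dual b) (dual a)
      refine Deq.trans (deq_lol_congr_l _
        (Deq.tens_congr
          (Deq.trans (deq_lol_congr_l _ ihb) (Deq.dual_dual _))
          (Deq.trans (deq_lol_congr_l _ iha) (Deq.dual_dual _)))) ?_
      exact deq_lol_congr_l _ (Deq.tens_comm _ _)
  | parr a b iha ihb =>
      -- dual = tens (dual b) (dual a)
      refine Deq.trans (Deq.tens_congr ihb iha) ?_
      refine Deq.trans (Deq.tens_comm _ _) ?_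
      exact Deq.symm (Deq.dual_dual _)
  | one => exact Deq.symm (Deq.one_lol _)
  | bot => exact Deq.symm deq_lol_bot_bot
  | withh a b iha ihb =>
      -- dual = oplus (dual b) (dual a)
      refine Deq.trans (deq_lol_congr_l _
        (Deq.with_congr
          (Deq.trans (deq_lol_congr_l _ ihb) (Deq.dual_dual _))
          (Deq.trans (deq_lol_congr_l _ iha) (Deq.dual_dual _)))) ?_
      exact deq_lol_congr_l _ (Deq.with_comm _ _)
  | oplus a b iha ihb =>
      -- dual = withh (dual b) (dual a)
      refine Deq.trans (Deq.with_congr ihb iha) ?_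
      refine Deq.trans (Deq.with_comm _ _) ?_
      exact Deq.symm (Deq.dual_dual _)
  | top => exact Deq.refl _
  | zero => exact Deq.symm (Deq.dual_dual _)

/-- Translating to MALL and back yields a 𝒟-equal formula: ⟨⟦F⟧⟩ ≈_𝒟 F. -/
theorem trC_trM (F : CF) : Deq (trC (trM F)) F := by
  induction F with
  | atom x => exact Deq.refl _
  | tens a b iha ihb => exact Deq.tens_congr iha ihb
  | one => exact Deq.refl _
  | lol a b iha ihb =>
      -- trC (trM (lol a b)) = lol (tens (lol (trC (dual (trM a))) bot) (lol (trC (trM b)) bot)) bot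
      refine Deq.trans (deq_lol_congr_l _
        (Deq.tens_congr
          (Deq.trans (deq_lol_congr_l _
            (Deq.trans (trC_dual (trM a)) (deq_lol_congr_l _ iha))) (Deq.dual_dual _))
          (deq_lol_congr_l _ ihb))) ?_
      refine Deq.trans (Deq.lol_tens _ _ _) ?_
      exact Deq.lol_congr (Deq.refl a) (Deq.dual_dual b)
  | bot => exact Deq.refl _
  | withh a b iha ihb => exact Deq.with_congr iha ihb
  | top => exact Deq.refl _
end

section
/- If two MALL formulas A and B are equal in the equational theory E of MALL type isomorphisms, then their categorical translations are equal in the theory 𝒟: A ≡_E B implies ⟨A⟩ ≈_𝒟 ⟨B⟩. -/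
/-- The equational theory E of MALL type isomorphisms. -/
inductive Eeq : MF → MF → Prop where
  | refl (a) : Eeq a a
  | symm : Eeq a b → Eeq b a
  | trans : Eeq a b → Eeq b c → Eeq a c
  | tens_congr : Eeq a a' → Eeq b b' → Eeq (MF.tens a b) (MF.tens a' b')
  | parr_congr : Eeq a a' → Eeq b b' → Eeq (MF.parr a b) (MF.parr a' b')
  | with_congr : Eeq a a' → Eeq b b' → Eeq (MF.withh a b) (MF.withh a' b')
  | oplus_congr : Eeq a a' → Eeq b b' → Eeq (MF.oplus a b) (MF.oplus a' b')
  | tens_assoc (a b c) : Eeq (MF.tens a (MF.tens b c)) (MF.tens (MF.tens a b) c)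
  | tens_comm (a b) : Eeq (MF.tens a b) (MF.tens b a)
  | parr_assoc (a b c) : Eeq (MF.parr a (MF.parr b c)) (MF.parr (MF.parr a b) c)
  | parr_comm (a b) : Eeq (MF.parr a b) (MF.parr b a)
  | with_assoc (a b c) : Eeq (MF.withh a (MF.withh b c)) (MF.withh (MF.withh a b) c)
  | with_comm (a b) : Eeq (MF.withh a b) (MF.withh b a)
  | oplus_assoc (a b c) : Eeq (MF.oplus a (MF.oplus b c)) (MF.oplus (MF.oplus a b) c)
  | oplus_comm (a b) : Eeq (MF.oplus a b) (MF.oplus b a)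
  | tens_one (a) : Eeq (MF.tens a MF.one) a
  | parr_bot (a) : Eeq (MF.parr a MF.bot) a
  | oplus_zero (a) : Eeq (MF.oplus a MF.zero) a
  | with_top (a) : Eeq (MF.withh a MF.top) a
  | tens_dist (a b c) : Eeq (MF.tens a (MF.oplus b c)) (MF.oplus (MF.tens a b) (MF.tens a c))
  | parr_dist (a b c) : Eeq (MF.parr a (MF.withh b c)) (MF.withh (MF.parr a b) (MF.parr a c))
  | tens_zero (a) : Eeq (MF.tens a MF.zero) MF.zero
  | parr_top (a) : Eeq (MF.parr a MF.top) MF.top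
namespace DeqAux

open CF Deq

/-- Dual: a ⊸ ⊥. -/
abbrev d (a : CF) : CF := CF.lol a CF.bot

lemma d_congr {a b : CF} (h : Deq a b) : Deq (d a) (d b) :=
  Deq.lol_congr h (Deq.refl _)

lemma dd (a : CF) : Deq (d (d a)) a := Deq.dual_dual a

lemma of_dual {a b : CF} (h : Deq (d a) (d b)) : Deq a b :=
  Deq.trans (Deq.symm (dd a)) (Deq.trans (d_congr h) (dd b))

/-- ⊥ ⊸ ⊥ ≡ 1 -/
lemma dbot : Deq (d CF.bot) CF.one :=
  Deq.trans (d_congr (Deq.symm (Deq.one_lol CF.bot))) (Deq.dual_dual CF.one)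

/-- (⊤⊸⊥)⊸⊥ ≡ ⊤ -/
lemma dzero : Deq (d (d CF.top)) CF.top := dd CF.top

/-- (a ⊗ b)⊸⊥ ≡ a ⊸ (b ⊸ ⊥) -/
lemma dtens (a b : CF) : Deq (d (CF.tens a b)) (CF.lol a (d b)) :=
  Deq.lol_tens a b CF.bot

/-- a ⊸ b** ≡ a ⊸ b -/
lemma lol_dd (a b : CF) : Deq (CF.lol a (d (d b))) (CF.lol a b) :=
  Deq.lol_congr (Deq.refl a) (dd b)

/-- (a* ⊗ b*)* ≡ a* ⊸ b -/
lemma parr_lol (a b : CF) : Deq (d (CF.tens (d a) (d b))) (CF.lol (d a) b) :=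
  Deq.trans (dtens _ _) (lol_dd _ _)

end DeqAux

/-- E-equal MALL formulas have 𝒟-equal categorical translations. -/
theorem eeq_deq (A B : MF) (h : Eeq A B) : Deq (trC A) (trC B) := by
  induction h with
  | refl a => exact Deq.refl _
  | symm _ ih => exact Deq.symm ih
  | trans _ _ ih1 ih2 => exact Deq.trans ih1 ih2
  | tens_congr _ _ ih1 ih2 => exact Deq.tens_congr ih1 ih2
  | parr_congr _ _ ih1 ih2 =>
      exact DeqAux.d_congr (Deq.tens_congr (DeqAux.d_congr ih1) (DeqAux.d_congr ih2))
  | with_congr _ _ ih1 ih2 => exact Deq.with_congr ih1 ih2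
  | oplus_congr _ _ ih1 ih2 =>
      exact DeqAux.d_congr (Deq.with_congr (DeqAux.d_congr ih1) (DeqAux.d_congr ih2))
  | tens_assoc a b c => exact Deq.tens_assoc _ _ _
  | tens_comm a b => exact Deq.tens_comm _ _
  | parr_assoc a b c =>
      -- (a* ⊗ ((b*⊗c*)*)*)* ≡ (((a*⊗b*)*)* ⊗ c*)*
      refine DeqAux.d_congr ?_
      refine Deq.trans (Deq.tens_congr (Deq.refl _) (DeqAux.dd _)) ?_
      refine Deq.trans (Deq.tens_assoc _ _ _) ?_
      exact Deq.tens_congr (Deq.symm (DeqAux.dd _)) (Deq.refl _)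
  | parr_comm a b => exact DeqAux.d_congr (Deq.tens_comm _ _)
  | parr_bot a =>
      -- (a* ⊗ ⊥*)* ≡ a
      refine Deq.trans (DeqAux.d_congr ?_) (DeqAux.dd _)
      exact Deq.trans (Deq.tens_congr (Deq.refl _) DeqAux.dbot) (Deq.tens_one _)
  | with_assoc a b c => exact Deq.with_assoc _ _ _
  | with_comm a b => exact Deq.with_comm _ _
  | oplus_assoc a b c =>
      refine DeqAux.d_congr ?_
      refine Deq.trans (Deq.with_congr (Deq.refl _) (DeqAux.dd _)) ?_
      refine Deq.trans (Deq.with_assoc _ _ _) ?_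
      exact Deq.with_congr (Deq.symm (DeqAux.dd _)) (Deq.refl _)
  | oplus_comm a b => exact DeqAux.d_congr (Deq.with_comm _ _)
  | tens_one a => exact Deq.tens_one _
  | oplus_zero a =>
      -- (a* & (⊤⊸⊥)*)* ≡ a
      refine Deq.trans (DeqAux.d_congr ?_) (DeqAux.dd _)
      exact Deq.trans (Deq.with_congr (Deq.refl _) (DeqAux.dd CF.top)) (Deq.with_top _)
  | with_top a => exact Deq.with_top _
  | tens_dist a b c =>
      -- a ⊗ (b*&c*)* ≡ ((a⊗b)* & (a⊗c)*)*
      refine DeqAux.of_dual ?_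
      simp only [trC]
      refine Deq.trans (DeqAux.dtens _ _) ?_
      refine Deq.trans (DeqAux.lol_dd _ _) ?_
      refine Deq.trans (Deq.lol_with _ _ _) ?_
      refine Deq.symm (Deq.trans (DeqAux.dd _) ?_)
      exact Deq.with_congr (Deq.lol_tens _ _ _) (Deq.lol_tens _ _ _)
  | parr_dist a b c =>
      -- (a* ⊗ (b&c)*)* ≡ (a*⊗b*)* & (a*⊗c*)*
      refine Deq.trans (DeqAux.parr_lol _ _) ?_
      refine Deq.trans (Deq.lol_with _ _ _) ?_
      exact Deq.with_congr (Deq.symm (DeqAux.parr_lol _ _)) (Deq.symm (DeqAux.parr_lol _ _))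
  | tens_zero a =>
      -- a ⊗ ⊤* ≡ ⊤*  (⟨0⟩ = ⊤⊸⊥)
      refine DeqAux.of_dual ?_
      refine Deq.trans (DeqAux.dtens _ _) ?_
      refine Deq.trans (Deq.lol_congr (Deq.refl (trC a)) (DeqAux.dd CF.top)) ?_
      exact Deq.trans (Deq.lol_top (trC a)) (Deq.symm (DeqAux.dd CF.top))
  | parr_top a =>
      -- (a* ⊗ ⊤*)* ≡ ⊤
      refine Deq.trans (DeqAux.dtens _ _) ?_
      refine Deq.trans (Deq.lol_congr (Deq.refl _) (DeqAux.dd CF.top)) ?_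
      exact Deq.lol_top _
end

section
/- Abstract rewriting theorem (Aoto–Toyama, as used for cut elimination modulo rule commutation): let ⊢⊣, →, and ⇝ be relations on a set A such that ⊢⊣ is symmetric and ⇝ ⊆ ⊢⊣; set ⇒ = → ∪ ⇝. Suppose (i) the relation → · ⇝* is strongly normalizing; (ii) ← · → ⊆ ⇒* · (⊢⊣)^= · ⇐*; (iii) ⊢⊣ · → ⊆ ((⊢⊣)^= · ⇐*) ∪ (→ · ⇒* · (⊢⊣)^= · ⇐*). Then → is Church–Rosser modulo the equivalence closure ∼ of ⊢⊣, i.e., (→ ∪ ← ∪ ⊢⊣)* ⊆ →* · ∼ · ←*. -/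
/-!
Measure a conversion by the multiset of the labels of its steps: an `→`-step out of `a`, taken
in either direction, is labelled `(a, false)`, and a `⊢⊣`-step between `a` and `b` contributes
`(a, true)` and `(b, true)`. Labels are compared lexicographically, first by the well-founded order
`(→ · ⇝*)⁺` and then by `false < true`. Everything reachable by `⇒*` after an `→`-step out of `x`
lies strictly below `x`, so the conversions that (ii) supplies for a peak `← · →` and (iii) for a
cliff `⊢⊣ · →` (or its mirror image `← · ⊢⊣`) carry only labels below those of the pattern they
replace. Hence every conversion that is not a valley `→* · ⊢⊣* · ←*` can be made smaller in the
Dershowitz–Manna order, which is well founded.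
-/

open Relation Multiset

namespace Multiset

variable {α : Type*} [Preorder α] {M N : Multiset α}

theorem IsDershowitzMannaLT.add_left (h : IsDershowitzMannaLT M N) (P : Multiset α) :
    IsDershowitzMannaLT (P + M) (P + N) := by
  obtain ⟨X, Y, Z, hZ, rfl, rfl, hYZ⟩ := h
  exact ⟨P + X, Y, Z, hZ, (add_assoc _ _ _).symm, (add_assoc _ _ _).symm, hYZ⟩

theorem IsDershowitzMannaLT.add_right (h : IsDershowitzMannaLT M N) (P : Multiset α) :
    IsDershowitzMannaLT (M + P) (N + P) := by
  simpa only [add_comm _ P] using h.add_left P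

end Multiset

namespace AotoToyama

inductive CostPath {α L : Type*} (s : Multiset L → α → α → Prop) : Multiset L → α → α → Prop
  | refl (a : α) : CostPath s 0 a a
  | head {k m : Multiset L} {a b c : α} : s k a b → CostPath s m b c → CostPath s (k + m) a c

namespace CostPath

variable {α L : Type*} {s t : Multiset L → α → α → Prop} {k m n : Multiset L} {a b c : α}

theorem single (h : s k a b) : CostPath s k a b := by
  simpa using head h (refl b)

theorem trans (h₁ : CostPath s m a b) (h₂ : CostPath s n b c) : CostPath s (m + n) a c := by
  induction h₁ with
  | refl => simpa using h₂
  | head hs _ ih => simpa [add_assoc] using head hs (ih h₂)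

theorem tail (h : CostPath s m a b) (hs : s k b c) : CostPath s (m + k) a c :=
  h.trans (single hs)

theorem mono (hst : ∀ k a b, s k a b → t k a b) (h : CostPath s m a b) : CostPath t m a b := by
  induction h with
  | refl => exact refl _
  | head hs _ ih => exact head (hst _ _ _ hs) ih

theorem symm (hs : ∀ k a b, s k a b → s k b a) (h : CostPath s m a b) : CostPath s m b a := by
  induction h with
  | refl => exact refl _
  | head h _ ih => simpa [add_comm] using ih.tail (hs _ _ _ h)

theorem reflTransGen {R : α → α → Prop} (hs : ∀ k a b, s k a b → R a b)
    (h : CostPath s m a b) : ReflTransGen R a b := by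
  induction h with
  | refl => exact .refl
  | head h _ ih => exact .head (hs _ _ _ h) ih

theorem exists_of_reflTransGen {R : α → α → Prop} (hs : ∀ a b, R a b → ∃ k, s k a b)
    (h : ReflTransGen R a b) : ∃ m, CostPath s m a b := by
  induction h using ReflTransGen.head_induction_on with
  | refl => exact ⟨0, refl _⟩
  | head hab _ ih =>
    obtain ⟨k, hk⟩ := hs _ _ hab
    obtain ⟨m, hm⟩ := ih
    exact ⟨k + m, head hk hm⟩

theorem exists_isDershowitzMannaLT_of_prefix [Preorder L] {X N y} (hm : CostPath s m a y)
    (hlt : IsDershowitzMannaLT m X) (ht : CostPath s n y b) (hN : X + n = N) :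
    ∃ m', CostPath s m' a b ∧ IsDershowitzMannaLT m' N :=
  ⟨m + n, hm.trans ht, hN ▸ hlt.add_right n⟩

end CostPath

variable {A : Type*}

theorem wellFounded_flip_transGen {R : A → A → Prop}
    (hR : ∀ f : ℕ → A, ¬ ∀ n, R (f n) (f (n + 1))) : WellFounded (flip (TransGen R)) := by
  have hwf : WellFounded (flip R) :=
    wellFounded_iff_isEmpty_descending_chain.2 ⟨fun f => hR f f.2⟩
  exact Subrelation.wf (fun h => transGen_swap.2 h) hwf.transGen

def RStep (r : A → A → Prop) (k : Multiset (A ×ₗ Bool)) (a b : A) : Prop :=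
  r a b ∧ k = {toLex (a, false)}

def EStep (e : A → A → Prop) (k : Multiset (A ×ₗ Bool)) (a b : A) : Prop :=
  e a b ∧ k = {toLex (a, true), toLex (b, true)}

def ConvStep (e r : A → A → Prop) (k : Multiset (A ×ₗ Bool)) (a b : A) : Prop :=
  RStep r k a b ∨ RStep r k b a ∨ EStep e k a b

abbrev Conv (e r : A → A → Prop) : Multiset (A ×ₗ Bool) → A → A → Prop :=
  CostPath (ConvStep e r)

def IsValley (e r : A → A → Prop) (m : Multiset (A ×ₗ Bool)) (a b : A) : Prop :=
  ∃ c d m₁ m₂ m₃, m = m₁ + m₂ + m₃ ∧ CostPath (RStep r) m₁ a c ∧ CostPath (EStep e) m₂ c d ∧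
    CostPath (RStep r) m₃ b d

def JoinsPeaks (e r w : A → A → Prop) : Prop :=
  ∀ a b c, r a b → r a c →
    ∃ d d', ReflTransGen (fun x y => r x y ∨ w x y) b d ∧ ReflGen e d d' ∧
      ReflTransGen (fun x y => r x y ∨ w x y) c d'

def JoinsCliffs (e r w : A → A → Prop) : Prop :=
  ∀ a b c, e a b → r b c →
    (∃ d, ReflGen e a d ∧ ReflTransGen (fun x y => r x y ∨ w x y) c d) ∨
    (∃ d d' d'', r a d ∧ ReflTransGen (fun x y => r x y ∨ w x y) d d' ∧
      ReflGen e d' d'' ∧ ReflTransGen (fun x y => r x y ∨ w x y) c d'')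

variable {e r w : A → A → Prop} {m : Multiset (A ×ₗ Bool)} {a b c d d' x y z : A}

theorem ConvStep.symm [Std.Symm e] {k : Multiset (A ×ₗ Bool)} :
    ConvStep e r k a b → ConvStep e r k b a := by
  rintro (h | h | ⟨h, rfl⟩)
  · exact .inr (.inl h)
  · exact .inl h
  · exact .inr (.inr ⟨symm_of e h, pair_comm _ _⟩)

theorem Conv.symm [Std.Symm e] (h : Conv e r m a b) : Conv e r m b a :=
  CostPath.symm (fun _ _ _ => ConvStep.symm) h

theorem Conv.exists_of_reflTransGen
    (h : ReflTransGen (fun x y => r x y ∨ r y x ∨ e x y) a b) : ∃ m, Conv e r m a b :=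
  CostPath.exists_of_reflTransGen (fun _ _ h => h.elim (fun h => ⟨_, .inl ⟨h, rfl⟩⟩) fun h =>
    h.elim (fun h => ⟨_, .inr (.inl ⟨h, rfl⟩)⟩) fun h => ⟨_, .inr (.inr ⟨h, rfl⟩)⟩) h

theorem IsValley.conv [Std.Symm e] (h : IsValley e r m a b) : Conv e r m a b := by
  obtain ⟨c, d, m₁, m₂, m₃, rfl, h₁, h₂, h₃⟩ := h
  exact ((h₁.mono fun _ _ _ => .inl).trans (h₂.mono fun _ _ _ h => .inr (.inr h))).trans
    (Conv.symm (h₃.mono fun _ _ _ => .inl))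

theorem IsValley.joinable (h : IsValley e r m a b) :
    ∃ c d, ReflTransGen r a c ∧ ReflTransGen e c d ∧ ReflTransGen r b d := by
  obtain ⟨c, d, m₁, m₂, m₃, -, h₁, h₂, h₃⟩ := h
  exact ⟨c, d, h₁.reflTransGen fun _ _ _ h => h.1, h₂.reflTransGen fun _ _ _ h => h.1,
    h₃.reflTransGen fun _ _ _ h => h.1⟩

section Order

variable [Preorder A]

theorem lt_of_comp_of_reflTransGen (hdec : ∀ x y, Comp r (ReflTransGen w) x y → y < x)
    (hyz : ReflTransGen (fun a b => r a b ∨ w a b) y z) :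
    ∀ x, Comp r (ReflTransGen w) x y → z < x := by
  induction hyz using ReflTransGen.head_induction_on with
  | refl => exact fun x => hdec x _
  | head hstep _ ih =>
    rintro x ⟨y₀, hxy₀, hy₀⟩
    rcases hstep with hr | hw
    · exact (ih _ ⟨_, hr, .refl⟩).trans (hdec _ _ ⟨y₀, hxy₀, hy₀⟩)
    · exact ih x ⟨y₀, hxy₀, hy₀.tail hw⟩

theorem toLex_lt_of_reflTransGen (hdec : ∀ x y, Comp r (ReflTransGen w) x y → y < x)
    (hxy : r x y) (hyz : ReflTransGen (fun a b => r a b ∨ w a b) y z) (i j : Bool) :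
    toLex (z, i) < toLex (x, j) :=
  Prod.Lex.toLex_lt_toLex.2 (.inl (lt_of_comp_of_reflTransGen hdec hyz x ⟨y, hxy, .refl⟩))

theorem exists_conv_below_of_reflTransGen (hdec : ∀ x y, Comp r (ReflTransGen w) x y → y < x)
    (hwe : ∀ a b, w a b → e a b) (hxb : r x b)
    (hbc : ReflTransGen (fun a b => r a b ∨ w a b) b c) :
    ∃ m, Conv e r m b c ∧ ∀ u ∈ m, u < toLex (x, false) := by
  induction hbc with
  | refl => exact ⟨0, .refl b, by simp⟩
  | @tail p q hbp hpq ih =>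
    obtain ⟨m, hm, hlt⟩ := ih
    have hp := toLex_lt_of_reflTransGen hdec hxb hbp
    have hq := toLex_lt_of_reflTransGen hdec hxb (hbp.tail hpq)
    rcases hpq with h | h
    · exact ⟨_, hm.tail (.inl ⟨h, rfl⟩), by simpa [or_imp, forall_and, hp] using hlt⟩
    · exact ⟨_, hm.tail (.inr (.inr ⟨hwe _ _ h, rfl⟩)), by
        simpa [or_imp, forall_and, hp, hq] using hlt⟩

theorem exists_conv_below_of_join [Std.Symm e] (hdec : ∀ x y, Comp r (ReflTransGen w) x y → y < x)
    (hwe : ∀ a b, w a b → e a b) (hxb : r x b) (hyc : r y c)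
    (hbd : ReflTransGen (fun a b => r a b ∨ w a b) b d) (hdd' : ReflGen e d d')
    (hcd' : ReflTransGen (fun a b => r a b ∨ w a b) c d') :
    ∃ m, Conv e r m b c ∧ ∀ u ∈ m, u < toLex (x, false) ∨ u < toLex (y, false) := by
  obtain ⟨m₁, h₁, hlt₁⟩ := exists_conv_below_of_reflTransGen hdec hwe hxb hbd
  obtain ⟨m₃, h₃, hlt₃⟩ := exists_conv_below_of_reflTransGen hdec hwe hyc hcd'
  rcases hdd' with _ | hdd'
  · refine ⟨m₁ + m₃, h₁.trans h₃.symm, ?_⟩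
    simp only [Multiset.mem_add]
    rintro u (hu | hu)
    exacts [.inl (hlt₁ u hu), .inr (hlt₃ u hu)]
  · refine ⟨m₁ + {toLex (d, true), toLex (d', true)} + m₃,
      (h₁.tail (.inr (.inr ⟨hdd', rfl⟩))).trans h₃.symm, ?_⟩
    have hd := toLex_lt_of_reflTransGen hdec hxb hbd true false
    have hd' := toLex_lt_of_reflTransGen hdec hyc hcd' true false
    simp only [Multiset.mem_add, Multiset.insert_eq_cons, Multiset.mem_cons,
      Multiset.mem_singleton]
    rintro u ((hu | rfl | rfl) | hu)
    exacts [.inl (hlt₁ u hu), .inl hd, .inr hd', .inr (hlt₃ u hu)]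

theorem exists_conv_lt_of_peak [Std.Symm e] (hdec : ∀ x y, Comp r (ReflTransGen w) x y → y < x)
    (hwe : ∀ a b, w a b → e a b) (hii : JoinsPeaks e r w) (hxa : r x a) (hxy : r x y) :
    ∃ m, Conv e r m a y ∧ IsDershowitzMannaLT m ({toLex (x, false)} + {toLex (x, false)}) := by
  obtain ⟨d, d', had, hdd', hyd'⟩ := hii x a y hxa hxy
  obtain ⟨m, hm, hlt⟩ := exists_conv_below_of_join hdec hwe hxa hxy had hdd' hyd'
  exact ⟨m, hm, 0, m, _, by simp, (zero_add m).symm, (zero_add _).symm,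
    fun u hu => ⟨toLex (x, false), by simp, (hlt u hu).elim id id⟩⟩

theorem exists_conv_lt_of_cliff [Std.Symm e] (hdec : ∀ x y, Comp r (ReflTransGen w) x y → y < x)
    (hwe : ∀ a b, w a b → e a b) (hiii : JoinsCliffs e r w) (hax : e a x) (hxy : r x y) :
    ∃ m, Conv e r m a y ∧
      IsDershowitzMannaLT m ({toLex (a, true), toLex (x, true)} + {toLex (x, false)}) := by
  rcases hiii a x y hax hxy with ⟨d, had, hyd⟩ | ⟨d, d', d'', had, hdd', hd'd'', hyd''⟩
  · obtain ⟨m, hm, hlt⟩ := exists_conv_below_of_reflTransGen hdec hwe hxy hyd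
    rcases had with _ | had
    · exact ⟨m, hm.symm, 0, m, _, by simp, (zero_add m).symm, (zero_add _).symm,
        fun u hu => ⟨toLex (x, false), by simp, hlt u hu⟩⟩
    · refine ⟨{toLex (a, true), toLex (d, true)} + m, .head (.inr (.inr ⟨had, rfl⟩)) hm.symm,
        {toLex (a, true)}, {toLex (d, true)} + m, {toLex (x, true)} + {toLex (x, false)},
        by simp, by simp [Multiset.cons_swap], by simp [Multiset.cons_swap], ?_⟩
      have hd := toLex_lt_of_reflTransGen hdec hxy hyd true false
      simp only [Multiset.mem_add, Multiset.mem_singleton]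
      rintro u (rfl | hu)
      exacts [⟨_, by simp, hd⟩, ⟨_, by simp, hlt u hu⟩]
  · obtain ⟨m, hm, hlt⟩ := exists_conv_below_of_join hdec hwe had hxy hdd' hd'd'' hyd''
    have ha : toLex (a, false) < toLex (a, true) :=
      Prod.Lex.toLex_lt_toLex.2 (.inr ⟨rfl, Bool.false_lt_true⟩)
    refine ⟨{toLex (a, false)} + m, .head (.inl ⟨had, rfl⟩) hm, 0, _, _,
      by simp, (zero_add _).symm, (zero_add _).symm, ?_⟩
    simp only [Multiset.mem_add, Multiset.mem_singleton]
    rintro u (rfl | hu)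
    · exact ⟨_, by simp, ha⟩
    · rcases hlt u hu with hu | hu
      exacts [⟨_, by simp, hu.trans ha⟩, ⟨_, by simp, hu⟩]

theorem isValley_or_exists_conv_lt [Std.Symm e]
    (hdec : ∀ x y, Comp r (ReflTransGen w) x y → y < x) (hwe : ∀ a b, w a b → e a b)
    (hii : JoinsPeaks e r w) (hiii : JoinsCliffs e r w) (h : Conv e r m a b) :
    IsValley e r m a b ∨ ∃ m', Conv e r m' a b ∧ IsDershowitzMannaLT m' m := by
  induction h with
  | refl a => exact .inl ⟨a, a, 0, 0, 0, by simp, .refl a, .refl a, .refl a⟩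
  | @head k t a x b hs _ ih =>
    rcases ih with ⟨c, d, t₁, t₂, t₃, rfl, h₁, h₂, h₃⟩ | ⟨t', ht', hlt⟩
    swap
    · exact .inr ⟨k + t', .head hs ht', hlt.add_left k⟩
    rcases hs with ⟨hax, rfl⟩ | ⟨hxa, rfl⟩ | ⟨hax, rfl⟩
    · exact .inl ⟨c, d, _, t₂, t₃, by simp [add_assoc], .head ⟨hax, rfl⟩ h₁, h₂, h₃⟩
    · cases h₁ with
      | refl =>
        cases h₂ with
        | refl =>
          exact .inl ⟨a, a, 0, 0, _, by simp [add_comm], .refl a, .refl a, h₃.tail ⟨hxa, rfl⟩⟩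
        | head hxz h₂' =>
          obtain ⟨hxz, rfl⟩ := hxz
          obtain ⟨m, hm, hlt⟩ := exists_conv_lt_of_cliff hdec hwe hiii (symm_of e hxz) hxa
          exact .inr (hm.symm.exists_isDershowitzMannaLT_of_prefix hlt
            (IsValley.conv ⟨_, d, 0, _, t₃, rfl, .refl _, h₂', h₃⟩) (by rw [pair_comm]; abel))
      | head hxy h₁' =>
        obtain ⟨hxy, rfl⟩ := hxy
        obtain ⟨m, hm, hlt⟩ := exists_conv_lt_of_peak hdec hwe hii hxa hxy
        exact .inr (hm.exists_isDershowitzMannaLT_of_prefix hlt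
          (IsValley.conv ⟨c, d, _, t₂, t₃, rfl, h₁', h₂, h₃⟩) (by abel))
    · cases h₁ with
      | refl => exact .inl ⟨a, d, 0, _, t₃, by simp, .refl a, .head ⟨hax, rfl⟩ h₂, h₃⟩
      | head hxy h₁' =>
        obtain ⟨hxy, rfl⟩ := hxy
        obtain ⟨m, hm, hlt⟩ := exists_conv_lt_of_cliff hdec hwe hiii hax hxy
        exact .inr (hm.exists_isDershowitzMannaLT_of_prefix hlt
          (IsValley.conv ⟨c, d, _, t₂, t₃, rfl, h₁', h₂, h₃⟩) (by abel))

theorem joinable_of_conv [WellFoundedLT A] [Std.Symm e]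
    (hdec : ∀ x y, Comp r (ReflTransGen w) x y → y < x) (hwe : ∀ a b, w a b → e a b)
    (hii : JoinsPeaks e r w) (hiii : JoinsCliffs e r w) (h : Conv e r m a b) :
    ∃ c d, ReflTransGen r a c ∧ ReflTransGen e c d ∧ ReflTransGen r b d := by
  induction m using (wellFounded_isDershowitzMannaLT (α := A ×ₗ Bool)).induction
    generalizing a b with
  | _ m ih =>
    rcases isValley_or_exists_conv_lt hdec hwe hii hiii h with hv | ⟨m', h', hlt⟩
    exacts [hv.joinable, ih m' hlt h']

end Order

end AotoToyama

/-- Aoto–Toyama abstract rewriting theorem: under hypotheses (i)–(iii), the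
relation `r` (→) is Church–Rosser modulo the equivalence closure of `e` (⊢⊣),
where `w` (⇝) is a sub-relation of `e` and `⇒ = → ∪ ⇝`. -/
theorem aoto_toyama_church_rosser_modulo {A : Type*} (e r w : A → A → Prop)
    (hsym : Symmetric e)
    (hwe : ∀ a b, w a b → e a b)
    -- (i) `→ · ⇝*` is strongly normalizing
    (hSN : ∀ f : ℕ → A,
      ¬ (∀ n : ℕ, Relation.Comp r (Relation.ReflTransGen w) (f n) (f (n + 1))))
    -- (ii) `← · → ⊆ ⇒* · (⊢⊣)^= · ⇐*`
    (hii : ∀ a b c, r a b → r a c →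
      ∃ d d', Relation.ReflTransGen (fun x y => r x y ∨ w x y) b d ∧
        Relation.ReflGen e d d' ∧
        Relation.ReflTransGen (fun x y => r x y ∨ w x y) c d')
    -- (iii) `⊢⊣ · → ⊆ ((⊢⊣)^= · ⇐*) ∪ (→ · ⇒* · (⊢⊣)^= · ⇐*)`
    (hiii : ∀ a b c, e a b → r b c →
      (∃ d, Relation.ReflGen e a d ∧
        Relation.ReflTransGen (fun x y => r x y ∨ w x y) c d) ∨
      (∃ d d' d'', r a d ∧
        Relation.ReflTransGen (fun x y => r x y ∨ w x y) d d' ∧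
        Relation.ReflGen e d' d'' ∧
        Relation.ReflTransGen (fun x y => r x y ∨ w x y) c d'')) :
    -- `→` is Church–Rosser modulo the equivalence closure of `⊢⊣`
    ∀ a b, Relation.ReflTransGen (fun x y => r x y ∨ r y x ∨ e x y) a b →
      ∃ c d, Relation.ReflTransGen r a c ∧ Relation.EqvGen e c d ∧
        Relation.ReflTransGen r b d := by
  have hwf := AotoToyama.wellFounded_flip_transGen hSN
  let : IsStrictOrder A (flip (TransGen (Comp r (ReflTransGen w)))) :=
    { toIrrefl := hwf.irrefl, trans := fun _ _ _ h₁ h₂ => h₂.trans h₁ }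
  let := partialOrderOfSO (flip (TransGen (Comp r (ReflTransGen w))))
  have : WellFoundedLT A := ⟨hwf⟩
  have : Std.Symm e := ⟨fun _ _ h => hsym h⟩
  intro a b hab
  obtain ⟨m, hm⟩ := AotoToyama.Conv.exists_of_reflTransGen hab
  obtain ⟨c, d, hac, hcd, hbd⟩ :=
    AotoToyama.joinable_of_conv (fun _ _ h => TransGen.single h) hwe hii hiii hm
  exact ⟨c, d, hac, EqvGen.reflTransGen_le_eqvGen e c d hcd, hbd⟩
end
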